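/- arXiv:2306.12192 — 5 statements merged into one kernel-verified Lean document; each statement's English description precedes it below -/
import Mathlib

section
/- Let G be a group acting acylindrically by isometries on a simplicial tree T, generated by an arbitrary (possibly infinite) set S. If for every pair of distinct elements sᵢ, sⱼ ∈ S the elements sᵢ, sⱼ, and sᵢsⱼ each act elliptically on T (fix a point), then the action of G on T is elliptic (G fixes a point of T). -/
/-- An action of a group `G` by simplicial isometries (automorphisms) on a simplicial
tree, i.e. a connected acyclic simple graph, with the natural edge metric. -/
structure TreeAction (G : Type*) [Group G] where
  V : Type
  T : SimpleGraph V
  isTree : T.IsTree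
  act : G →* (T ≃g T)

namespace TreeAction

variable {G : Type*} [Group G] (A : TreeAction G)

/-- The action fixes a point of the tree (the action is elliptic). -/
def FixesPoint : Prop := ∃ x : A.V, ∀ g : G, A.act g x = x

/-- An element is elliptic if it fixes a point of the tree. -/
def Elliptic (g : G) : Prop := ∃ x : A.V, A.act g x = x

/-- The action has bounded orbits. -/
def BoundedOrbits : Prop := ∃ (x : A.V) (B : ℕ), ∀ g : G, A.T.dist x (A.act g x) ≤ B

/-- `(k, C)`-acylindricity: the pointwise stabiliser of any geodesic edge path of length
at least `k` (equivalently, in a tree, the common stabiliser of two points at distance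
at least `k`) has at most `C` elements. -/
def KCAcylindrical (k C : ℕ) : Prop :=
  ∀ x y : A.V, k ≤ A.T.dist x y →
    {g : G | A.act g x = x ∧ A.act g y = y}.Finite ∧
      {g : G | A.act g x = x ∧ A.act g y = y}.ncard ≤ C

/-- An action on a tree is acylindrical if it is `(k, C)`-acylindrical for some `k ≥ 0`,
`C ≥ 1`. -/
def Acylindrical : Prop := ∃ k C : ℕ, 1 ≤ C ∧ A.KCAcylindrical k C

/-- Bowditch's definition of acylindricity for the action on the tree. -/
def BowditchAcylindrical : Prop :=
  ∀ ε : ℕ, ∃ R N : ℕ, ∀ x y : A.V, R ≤ A.T.dist x y →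
    {g : G | A.T.dist x (A.act g x) ≤ ε ∧ A.T.dist y (A.act g y) ≤ ε}.Finite ∧
      {g : G | A.T.dist x (A.act g x) ≤ ε ∧ A.T.dist y (A.act g y) ≤ ε}.ncard ≤ N

end TreeAction

/-- A group is virtually cyclic if it has a cyclic subgroup of finite index. -/
def IsVirtuallyCyclic (G : Type*) [Group G] : Prop :=
  ∃ H : Subgroup G, H.FiniteIndex ∧ IsCyclic H

namespace TreeAction

variable {G : Type*} [Group G] (A : TreeAction G)

/-- The action is non-elementary: unbounded orbits and the group is not virtually
cyclic. -/
def NonElementary : Prop := ¬ A.BoundedOrbits ∧ ¬ IsVirtuallyCyclic G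

/-- The action fixes a bi-infinite geodesic line setwise. -/
def FixesLine : Prop :=
  ∃ ℓ : ℤ → A.V, (∀ m n : ℤ, (A.T.dist (ℓ m) (ℓ n) : ℤ) = |m - n|) ∧
    ∀ g : G, (fun v => A.act g v) '' Set.range ℓ = Set.range ℓ

end TreeAction

/-- A group is acylindrically arboreal if it admits a non-elementary acylindrical
action on a simplicial tree. -/
def AcylindricallyArboreal (G : Type*) [Group G] : Prop :=
  ∃ A : TreeAction G, A.Acylindrical ∧ A.NonElementary

/-- Property (FA⁻): every action on a simplicial tree either fixes a point or fixes a
bi-infinite geodesic setwise. -/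
def PropertyFAMinus (G : Type*) [Group G] : Prop :=
  ∀ A : TreeAction G, A.FixesPoint ∨ A.FixesLine

/-!
Fixed-point sets of tree automorphisms are convex, and convex subsets of a tree have the Helly
property, because any three vertices have a median. If `s`, `t` and `s t` are elliptic and `x` is
fixed by `s t`, then `t x = s⁻¹ x`, and the midpoint of `[x, t x]` is fixed by both `t` and `s`.
So the generators have pairwise common fixed points, and by Helly every element of `G`, and then
every finite subset `F` of `G`, fixes a point.

Let `p F` be the projection of a base point `x₀` onto the fixed set of `F`. For `F ⊆ F'`, the
geodesic from `x₀` to `p F'` passes through `p F`. If the distances `d(x₀, p F)` are bounded,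
the projection at maximal distance is fixed by all of `G`. Otherwise `F` fixes the two points
`p F` and `p F'` for suitable `F' ⊇ F`, and these are arbitrarily far apart, so acylindricity
bounds `|F|` uniformly: then `G` is finite and fixes a point.
-/

namespace SimpleGraph

variable {V V' : Type*} {T : SimpleGraph V} {T' : SimpleGraph V'} {a m p v w x y z : V}

theorem Walk.IsPath.append {p : T.Walk x y} {q : T.Walk y z} (hp : p.IsPath) (hq : q.IsPath)
    (h : ∀ v ∈ p.support, v ∈ q.support → v = y) : (p.append q).IsPath := by
  rw [Walk.isPath_def, Walk.support_append, List.nodup_append]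
  refine ⟨hp.support_nodup, hq.support_nodup.tail, fun v hv w hw hvw => ?_⟩
  obtain rfl := hvw
  obtain rfl := h v hv (List.mem_of_mem_tail hw)
  have hnodup := hq.support_nodup
  rw [← q.cons_tail_support] at hnodup
  exact (List.nodup_cons.1 hnodup).1 hw

theorem Connected.dist_map_le (hT : T.Connected) (f : T →g T') (x y : V) :
    T'.dist (f x) (f y) ≤ T.dist x y := by
  obtain ⟨p, hp⟩ := hT.exists_walk_length_eq_dist x y
  simpa [hp] using T'.dist_le (p.map f)

theorem Connected.dist_iso (hT : T.Connected) (φ : T ≃g T') (x y : V) :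
    T'.dist (φ x) (φ y) = T.dist x y := by
  refine le_antisymm (hT.dist_map_le φ.toHom x y) ?_
  simpa using (φ.connected_iff.1 hT).dist_map_le φ.symm.toHom (φ x) (φ y)

theorem exists_forall_dist_le {Y : Set V} (hY : Y.Nonempty) (a : V) :
    ∃ p ∈ Y, ∀ y ∈ Y, T.dist a p ≤ T.dist a y :=
  ⟨_, Function.argminOn_mem _ _ hY, fun _ hy => Function.argminOn_le _ _ hy⟩

/-- Metric betweenness; in a tree these are exactly the vertices on the path from `x` to `y`. -/
def Between (T : SimpleGraph V) (x v y : V) : Prop := T.dist x v + T.dist v y = T.dist x y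

theorem Between.symm (h : T.Between x v y) : T.Between y v x := by
  rw [Between, dist_comm, add_comm, dist_comm (u := v), h, dist_comm]

theorem Between.iso (hT : T.Connected) (φ : T ≃g T') (h : T.Between x v y) :
    T'.Between (φ x) (φ v) (φ y) := by
  simpa only [Between, hT.dist_iso] using h

def IsConvex (T : SimpleGraph V) (Y : Set V) : Prop :=
  ∀ ⦃x⦄, x ∈ Y → ∀ ⦃y⦄, y ∈ Y → ∀ ⦃v⦄, T.Between x v y → v ∈ Y

theorem IsConvex.inter {Y Z : Set V} (hY : T.IsConvex Y) (hZ : T.IsConvex Z) :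
    T.IsConvex (Y ∩ Z) :=
  fun _ hx _ hy _ hv => ⟨hY hx.1 hy.1 hv, hZ hx.2 hy.2 hv⟩

namespace IsTree

variable (hT : T.IsTree)
include hT

theorem length_eq_dist_of_isPath {p : T.Walk x y} (hp : p.IsPath) : p.length = T.dist x y := by
  obtain ⟨q, hq, hlen⟩ := hT.connected.exists_path_of_dist x y
  rw [(hT.existsUnique_path x y).unique hp hq, hlen]

theorem between_of_mem_support {p : T.Walk x y} (hp : p.IsPath) (hv : v ∈ p.support) :
    T.Between x v y := by
  classical
  have hlen := congrArg Walk.length (p.take_spec hv)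
  rw [Walk.length_append, hT.length_eq_dist_of_isPath hp,
    hT.length_eq_dist_of_isPath (hp.takeUntil hv),
    hT.length_eq_dist_of_isPath (hp.dropUntil hv)] at hlen
  exact hlen

theorem getVert_dist_of_between {p : T.Walk x y} (hp : p.IsPath) (hv : T.Between x v y) :
    p.getVert (T.dist x v) = v := by
  obtain ⟨q, hq⟩ := hT.connected.exists_walk_length_eq_dist x v
  obtain ⟨r, hr⟩ := hT.connected.exists_walk_length_eq_dist v y
  have hqr : (q.append r).IsPath :=
    (q.append r).isPath_of_length_eq_dist (by rw [Walk.length_append, hq, hr]; exact hv)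
  rw [(hT.existsUnique_path x y).unique hp hqr, ← hq, Walk.getVert_append', if_pos le_rfl,
    Walk.getVert_length]

theorem eq_of_between_of_dist_eq (hv : T.Between x v y) (hw : T.Between x w y)
    (h : T.dist x v = T.dist x w) : v = w := by
  obtain ⟨p, hp, -⟩ := hT.connected.exists_path_of_dist x y
  rw [← hT.getVert_dist_of_between hp hv, h, hT.getVert_dist_of_between hp hw]

theorem between_of_forall_mem_support_dist_le {p : T.Walk m z} (hp : p.IsPath)
    (hmin : ∀ v ∈ p.support, T.dist a m ≤ T.dist a v) : T.Between a m z := by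
  obtain ⟨q, hq, hqlen⟩ := hT.connected.exists_path_of_dist a m
  have hqp : (q.append p).IsPath := hq.append hp fun v hvq hvp => by
    have hbtw : T.Between a v m := hT.between_of_mem_support hq hvq
    have := hmin v hvp
    exact hT.connected.dist_eq_zero_iff.1 (by unfold Between at hbtw; omega)
  have hlen := hT.length_eq_dist_of_isPath hqp
  rwa [Walk.length_append, hqlen, hT.length_eq_dist_of_isPath hp] at hlen

theorem exists_median (a b c : V) :
    ∃ m, T.Between a m b ∧ T.Between a m c ∧ T.Between b m c := by
  classical
  obtain ⟨p, hp, -⟩ := hT.connected.exists_path_of_dist b c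
  obtain ⟨m, hm, hmin⟩ := p.support.toFinset.exists_min_image (T.dist a) ⟨b, by simp⟩
  rw [List.mem_toFinset] at hm
  replace hmin : ∀ v ∈ p.support, T.dist a m ≤ T.dist a v :=
    fun v hv => hmin v (List.mem_toFinset.2 hv)
  refine ⟨m, ?_, ?_, hT.between_of_mem_support hp hm⟩
  · refine hT.between_of_forall_mem_support_dist_le (hp.takeUntil hm).reverse fun v hv => ?_
    rw [Walk.support_reverse, List.mem_reverse] at hv
    exact hmin v (p.support_takeUntil_subset_support hm hv)
  · exact hT.between_of_forall_mem_support_dist_le (hp.dropUntil hm)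
      fun v hv => hmin v (p.support_dropUntil_subset_support hm hv)

theorem between_of_isConvex_of_forall_dist_le {Y : Set V} (hY : T.IsConvex Y) (hp : p ∈ Y)
    (hmin : ∀ y ∈ Y, T.dist a p ≤ T.dist a y) (hy : y ∈ Y) : T.Between a p y := by
  obtain ⟨q, hq, -⟩ := hT.connected.exists_path_of_dist p y
  exact hT.between_of_forall_mem_support_dist_le hq
    fun v hv => hmin v (hY hp hy (hT.between_of_mem_support hq hv))

theorem inter_inter_nonempty {Y₁ Y₂ Y₃ : Set V} (h₁ : T.IsConvex Y₁) (h₂ : T.IsConvex Y₂)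
    (h₃ : T.IsConvex Y₃) (h₁₂ : (Y₁ ∩ Y₂).Nonempty) (h₁₃ : (Y₁ ∩ Y₃).Nonempty)
    (h₂₃ : (Y₂ ∩ Y₃).Nonempty) : (Y₁ ∩ Y₂ ∩ Y₃).Nonempty := by
  obtain ⟨c, hc₁, hc₂⟩ := h₁₂
  obtain ⟨b, hb₁, hb₃⟩ := h₁₃
  obtain ⟨a, ha₂, ha₃⟩ := h₂₃
  obtain ⟨m, hab, hac, hbc⟩ := hT.exists_median a b c
  exact ⟨m, ⟨h₁ hb₁ hc₁ hbc, h₂ ha₂ hc₂ hac⟩, h₃ ha₃ hb₃ hab⟩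

theorem exists_forall_mem_of_pairwise_inter_nonempty {ι : Type*} (s : Finset ι)
    {Y : ι → Set V} (hY : ∀ i ∈ s, T.IsConvex (Y i))
    (h : ∀ i ∈ s, ∀ j ∈ s, (Y i ∩ Y j).Nonempty) : ∃ x, ∀ i ∈ s, x ∈ Y i := by
  rcases s.eq_empty_or_nonempty with rfl | hs
  · exact ⟨hT.connected.nonempty.some, by simp⟩
  induction hs using Finset.Nonempty.cons_induction generalizing Y with
  | singleton i =>
    obtain ⟨x, hx, -⟩ := h i (by simp) i (by simp)
    exact ⟨x, by simpa using hx⟩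
  | cons i s hi hs ih =>
    have hYi := hY i (by simp)
    obtain ⟨x, hx⟩ := ih (Y := fun j => Y j ∩ Y i)
      (fun j hj => (hY j (by simp [hj])).inter hYi) fun j hj k hk => by
        obtain ⟨x, ⟨hxj, hxk⟩, hxi⟩ := hT.inter_inter_nonempty (hY j (by simp [hj]))
          (hY k (by simp [hk])) hYi (h j (by simp [hj]) k (by simp [hk]))
          (h j (by simp [hj]) i (by simp)) (h k (by simp [hk]) i (by simp))
        exact ⟨x, ⟨hxj, hxi⟩, hxk, hxi⟩
    refine ⟨x, ?_⟩
    simp only [Finset.mem_cons, forall_eq_or_imp]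
    exact ⟨(hx _ hs.choose_spec).2, fun j hj => (hx j hj).1⟩

variable (φ ψ : T ≃g T)

theorem isConvex_fixedPoints : T.IsConvex {x | φ x = x} := by
  intro x (hx : φ x = x) y (hy : φ y = y) v hv
  show φ v = v
  have hφv : T.Between x (φ v) y := by simpa [hx, hy] using hv.iso hT.connected φ
  refine hT.eq_of_between_of_dist_eq hφv hv ?_
  rw [← hT.connected.dist_iso φ x v, hx]

theorem exists_fixed_midpoint (hφ : ∃ z, φ z = z) (x : V) :
    ∃ y, φ y = y ∧ T.Between x y (φ x) ∧ T.dist x y = T.dist y (φ x) := by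
  -- `y` is the fixed point nearest to `x`; the median `m` of `x`, `y`, `φ x` is fixed since `φ`
  -- maps `[y, m]` into `[y, φ x]` with `d(y, φ x) = d(y, x)`, so `m = y` by minimality.
  obtain ⟨y, hy, hmin⟩ := exists_forall_dist_le (T := T) hφ x
  obtain ⟨m, hxy, hxφx, hyφx⟩ := hT.exists_median x y (φ x)
  have hdist := hT.connected.dist_iso φ
  have hyφx' : T.dist y (φ x) = T.dist y x := by rw [← hdist y x, hy]
  have hm : φ m = m := by
    have hφm : T.Between (φ x) (φ m) y := hy ▸ hxy.iso hT.connected φ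
    refine hT.eq_of_between_of_dist_eq hφm hyφx.symm ?_
    have := hdist x m
    have := T.dist_comm (u := x) (v := y)
    have := T.dist_comm (u := m) (v := y)
    have := T.dist_comm (u := φ x) (v := m)
    unfold Between at hxy hyφx
    omega
  have hmy : T.dist m y = 0 := by
    have := hmin m hm
    unfold Between at hxy
    omega
  obtain rfl := hT.connected.dist_eq_zero_iff.1 hmy
  refine ⟨m, hm, hxφx, ?_⟩
  rw [hyφx', dist_comm]

theorem exists_fixed_of_fixed_comp (hφ : ∃ x, φ x = x) (hψ : ∃ x, ψ x = x)
    (hφψ : ∃ x, φ (ψ x) = x) : ∃ x, φ x = x ∧ ψ x = x := by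
  obtain ⟨x, hx⟩ := hφψ
  have hψx : ψ x = φ.symm x := by rw [eq_comm, φ.symm_apply_eq, hx]
  obtain ⟨y₁, hy₁, hb₁, hd₁⟩ := hT.exists_fixed_midpoint ψ hψ x
  obtain ⟨y₂, hy₂, hb₂, hd₂⟩ := hT.exists_fixed_midpoint φ.symm
    (hφ.imp fun z hz => φ.symm_apply_eq.2 hz.symm) x
  rw [← hψx] at hb₂ hd₂
  obtain rfl : y₁ = y₂ := hT.eq_of_between_of_dist_eq hb₁ hb₂ (by unfold Between at *; omega)
  exact ⟨y₁, (φ.symm_apply_eq.1 hy₂).symm, hy₁⟩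

end IsTree

end SimpleGraph

theorem Subgroup.exists_finset_subset_of_mem_closure {G : Type*} [Group G] {S : Set G} {g : G}
    (hg : g ∈ Subgroup.closure S) : ∃ F : Finset G, ↑F ⊆ S ∧ g ∈ Subgroup.closure (F : Set G) := by
  classical
  induction hg using Subgroup.closure_induction with
  | mem x hx => exact ⟨{x}, by simpa using hx, Subgroup.subset_closure (by simp)⟩
  | one => exact ⟨∅, by simp, one_mem _⟩
  | mul x y _ _ hx hy =>
    obtain ⟨F, hFS, hxF⟩ := hx
    obtain ⟨F', hF'S, hyF'⟩ := hy
    refine ⟨F ∪ F', by simpa using ⟨hFS, hF'S⟩, mul_mem ?_ ?_⟩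
    · exact Subgroup.closure_mono (by simp) hxF
    · exact Subgroup.closure_mono (by simp) hyF'
  | inv x _ hx =>
    obtain ⟨F, hFS, hxF⟩ := hx
    exact ⟨F, hFS, inv_mem hxF⟩

namespace TreeAction

open SimpleGraph

variable {G : Type*} [Group G] (A : TreeAction G)

theorem act_mul_apply (g h : G) (x : A.V) : A.act (g * h) x = A.act g (A.act h x) := by
  rw [map_mul]
  rfl

def fixedSet (F : Set G) : Set A.V := {x | ∀ g ∈ F, A.act g x = x}

theorem isConvex_fixedSet (F : Set G) : A.T.IsConvex (A.fixedSet F) :=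
  fun _ hx _ hy _ hv g hg => A.isTree.isConvex_fixedPoints (A.act g) (hx g hg) (hy g hg) hv

theorem exists_fixed_pair {s t : G} (hs : A.Elliptic s) (ht : A.Elliptic t)
    (hst : A.Elliptic (s * t)) : ∃ x, A.act s x = x ∧ A.act t x = x :=
  A.isTree.exists_fixed_of_fixed_comp _ _ hs ht (hst.imp fun x hx => by rwa [act_mul_apply] at hx)

theorem fixedSet_nonempty_of_pairwise (F : Finset G)
    (h : ∀ g ∈ F, ∀ h ∈ F, ∃ x, A.act g x = x ∧ A.act h x = x) : (A.fixedSet F).Nonempty :=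
  A.isTree.exists_forall_mem_of_pairwise_inter_nonempty F
    (fun g _ => A.isTree.isConvex_fixedPoints (A.act g)) h

theorem elliptic_of_mem_closure {S : Set G} (hell : ∀ s ∈ S, A.Elliptic s)
    (hprod : ∀ s ∈ S, ∀ t ∈ S, s ≠ t → A.Elliptic (s * t)) {g : G}
    (hg : g ∈ Subgroup.closure S) : A.Elliptic g := by
  obtain ⟨F, hFS, hgF⟩ := Subgroup.exists_finset_subset_of_mem_closure hg
  obtain ⟨x, hx⟩ := A.fixedSet_nonempty_of_pairwise F fun s hs t ht => by
    obtain rfl | hst := eq_or_ne s t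
    · obtain ⟨x, hx⟩ := hell s (hFS hs)
      exact ⟨x, hx, hx⟩
    · exact A.exists_fixed_pair (hell s (hFS hs)) (hell t (hFS ht))
        (hprod s (hFS hs) t (hFS ht) hst)
  exact ⟨x, (Subgroup.closure_le ((MulAction.stabilizer (A.T ≃g A.T) x).comap A.act)).2 hx hgF⟩

section Projection

variable {A} {x₀ : A.V} {p : Finset G → A.V} (hp : ∀ F : Finset G, p F ∈ A.fixedSet F)
  (hmin : ∀ F : Finset G, ∀ y ∈ A.fixedSet F, A.T.dist x₀ (p F) ≤ A.T.dist x₀ y)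
include hp hmin

theorem dist_proj_eq_add {F F' : Finset G} (h : F ⊆ F') :
    A.T.dist x₀ (p F') = A.T.dist x₀ (p F) + A.T.dist (p F) (p F') :=
  Eq.symm <| A.isTree.between_of_isConvex_of_forall_dist_le (A.isConvex_fixedSet F) (hp F)
    (hmin F) fun g hg => hp F' g (h hg)

theorem fixesPoint_of_forall_dist_proj_le {F₀ : Finset G}
    (hmax : ∀ F, A.T.dist x₀ (p F) ≤ A.T.dist x₀ (p F₀)) : A.FixesPoint := by
  classical
  refine ⟨p F₀, fun g => ?_⟩
  have hgate := dist_proj_eq_add hp hmin (Finset.subset_insert g F₀)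
  have hle := hmax (insert g F₀)
  obtain heq : p F₀ = p (insert g F₀) := A.isTree.connected.dist_eq_zero_iff.1 (by omega)
  rw [heq]
  exact hp _ g (Finset.mem_insert_self g F₀)

theorem card_le_of_kcAcylindrical {k C : ℕ} (hkc : A.KCAcylindrical k C)
    (hunb : ∀ n, ∃ F, n ≤ A.T.dist x₀ (p F)) (F : Finset G) : F.card ≤ C := by
  classical
  obtain ⟨F₁, hF₁⟩ := hunb (A.T.dist x₀ (p F) + k)
  have hgate := dist_proj_eq_add hp hmin (Finset.subset_union_left (s₁ := F) (s₂ := F₁))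
  have hle := hmin F₁ (p (F ∪ F₁)) fun g hg => hp _ g (Finset.mem_union_right F hg)
  obtain ⟨hfin, hcard⟩ := hkc (p F) (p (F ∪ F₁)) (by omega)
  calc F.card = (F : Set G).ncard := (Set.ncard_coe_finset F).symm
    _ ≤ {g : G | A.act g (p F) = p F ∧ A.act g (p (F ∪ F₁)) = p (F ∪ F₁)}.ncard :=
        Set.ncard_le_ncard (fun g hg => ⟨hp F g hg, hp _ g (Finset.mem_union_left F₁ hg)⟩) hfin
    _ ≤ C := hcard

end Projection

theorem fixesPoint_of_kcAcylindrical {k C : ℕ} (hkc : A.KCAcylindrical k C)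
    (hfix : ∀ F : Finset G, (A.fixedSet F).Nonempty) : A.FixesPoint := by
  obtain ⟨x₀⟩ := A.isTree.connected.nonempty
  choose p hp hmin using fun F => exists_forall_dist_le (T := A.T) (hfix F) x₀
  by_cases hbdd : BddAbove (Set.range fun F => A.T.dist x₀ (p F))
  · obtain ⟨_, ⟨F₀, rfl⟩, hmax⟩ := hbdd.exists_isGreatest_of_nonempty (Set.range_nonempty _)
    exact fixesPoint_of_forall_dist_proj_le hp hmin fun F => hmax ⟨F, rfl⟩
  · rw [not_bddAbove_iff] at hbdd
    have hunb (n : ℕ) : ∃ F, n ≤ A.T.dist x₀ (p F) := by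
      obtain ⟨_, ⟨F, rfl⟩, h⟩ := hbdd n
      exact ⟨F, h.le⟩
    let := fintypeOfFinsetCardLe C (card_le_of_kcAcylindrical hp hmin hkc hunb)
    obtain ⟨x, hx⟩ := hfix Finset.univ
    exact ⟨x, fun g => hx g (Finset.mem_univ g)⟩

end TreeAction

/-- If a group `G` acts acylindrically on a simplicial tree and is generated by an
arbitrary (possibly infinite) set `S` such that every `s ∈ S`, every `t ∈ S` and every
product `s * t` of distinct elements of `S` acts elliptically, then the action of `G`
is elliptic, i.e. `G` fixes a point of the tree. -/
theorem elliptic_generators_acylindrical {G : Type*} [Group G] (A : TreeAction G)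
    (hacyl : A.Acylindrical) (S : Set G)
    (hgen : Subgroup.closure S = ⊤)
    (hell : ∀ s ∈ S, A.Elliptic s)
    (hprod : ∀ s ∈ S, ∀ t ∈ S, s ≠ t → A.Elliptic (s * t)) :
    A.FixesPoint := by
  obtain ⟨k, C, -, hkc⟩ := hacyl
  have hell_all (g : G) : A.Elliptic g :=
    A.elliptic_of_mem_closure hell hprod (hgen ▸ Subgroup.mem_top g)
  exact A.fixesPoint_of_kcAcylindrical hkc fun F => A.fixedSet_nonempty_of_pairwise F
    fun g _ h _ => A.exists_fixed_pair (hell_all g) (hell_all h) (hell_all (g * h))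
end

section
/- Let G be a group acting by isometries on a simplicial tree T. The action is acylindrical (in Bowditch's sense) if and only if there exist integers k ≥ 0 and C ≥ 1 such that the action is (k,C)-acylindrical, i.e., the pointwise stabiliser of any geodesic edge path in T of length at least k contains at most C elements. -/
section TreeAux

open SimpleGraph SimpleGraph.Walk

variable {V : Type*} {G : SimpleGraph V}

/-- In a tree, every path realizes the distance between its endpoints. -/
lemma tree_path_length (hG : G.IsTree) {u v : V} (P : G.Walk u v) (hP : P.IsPath) :
    P.length = G.dist u v := by
  classical
  refine le_antisymm ?_ (SimpleGraph.dist_le P)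
  obtain ⟨w, hw⟩ := hG.isConnected.exists_walk_length_eq_dist u v
  have h1 : P = w.bypass := (hG.existsUnique_path u v).unique hP w.bypass_isPath
  calc P.length = w.bypass.length := by rw [h1]
    _ ≤ w.length := w.length_bypass_le
    _ = G.dist u v := hw

lemma getVert_dist_le (hc : G.Connected) {u v : V} (P : G.Walk u v) :
    ∀ i, G.dist u (P.getVert i) ≤ i := by
  induction P with
  | nil =>
    intro i
    simp [SimpleGraph.Walk.getVert, SimpleGraph.dist_self]
  | @cons a b c h q ih =>
    intro i
    cases i with
    | zero => show G.dist a a ≤ 0; simp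
    | succ n =>
      show G.dist a (q.getVert n) ≤ n + 1
      have h2 : G.dist a b ≤ 1 := (SimpleGraph.dist_eq_one_iff_adj.2 h).le
      calc G.dist a (q.getVert n) ≤ G.dist a b + G.dist b (q.getVert n) := hc.dist_triangle
        _ ≤ 1 + n := Nat.add_le_add h2 (ih n)
        _ = n + 1 := by omega

lemma getVert_dist_right_le {u v : V} (P : G.Walk u v) :
    ∀ i, G.dist (P.getVert i) v ≤ P.length - i := by
  induction P with
  | nil =>
    intro i
    simp [SimpleGraph.Walk.getVert, SimpleGraph.dist_self]
  | @cons a b c h q ih =>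
    intro i
    cases i with
    | zero =>
      show G.dist a c ≤ (q.cons h).length - 0
      simpa using SimpleGraph.dist_le (q.cons h)
    | succ n =>
      show G.dist (q.getVert n) c ≤ (q.cons h).length - (n + 1)
      have := ih n
      simp only [Walk.length_cons]
      omega

/-- Coordinates along a geodesic (= path) in a tree. -/
lemma path_coord (hG : G.IsTree) {u v : V} {P : G.Walk u v} (hP : P.IsPath) {i : ℕ}
    (hi : i ≤ P.length) :
    G.dist u (P.getVert i) = i ∧ G.dist (P.getVert i) v = P.length - i := by
  have h1 := getVert_dist_le hG.isConnected P i
  have h2 := getVert_dist_right_le P i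
  have h3 : P.length = G.dist u v := tree_path_length hG P hP
  have h4 : G.dist u v ≤ G.dist u (P.getVert i) + G.dist (P.getVert i) v :=
    hG.isConnected.dist_triangle
  omega

lemma mem_support_coord (hG : G.IsTree) {u v a : V} {P : G.Walk u v} (hP : P.IsPath)
    (ha : a ∈ P.support) :
    ∃ i, i ≤ P.length ∧ P.getVert i = a ∧ G.dist u a = i ∧ G.dist a v = P.length - i := by
  obtain ⟨i, hgv, hle⟩ := (Walk.mem_support_iff_exists_getVert).1 ha
  refine ⟨i, hle, hgv, ?_, ?_⟩
  · rw [← hgv]; exact (path_coord hG hP hle).1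
  · rw [← hgv]; exact (path_coord hG hP hle).2

/-- Additivity of distance for points on a common path in a tree. -/
lemma dist_add_on_path (hG : G.IsTree) {u v a b : V} {P : G.Walk u v} (hP : P.IsPath)
    (ha : a ∈ P.support) (hb : b ∈ P.support) (hab : G.dist u a ≤ G.dist u b) :
    G.dist u b = G.dist u a + G.dist a b := by
  classical
  have hQ : (P.takeUntil b hb).IsPath := hP.takeUntil hb
  have hQl : (P.takeUntil b hb).length = G.dist u b := tree_path_length hG _ hQ
  have hsplit : a ∈ (P.takeUntil b hb).support ∨ a ∈ (P.dropUntil b hb).support := by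
    have hspec := P.take_spec hb
    rw [← hspec] at ha
    exact (Walk.mem_support_append_iff _ _).1 ha
  rcases hsplit with h | h
  · obtain ⟨i, hi, -, hda, hdab⟩ := mem_support_coord hG hQ h
    omega
  · have hD : (P.dropUntil b hb).IsPath := hP.dropUntil hb
    obtain ⟨i, hi, -, hba, hav⟩ := mem_support_coord hG hD h
    obtain ⟨ia, hia, -, hua, hav2⟩ := mem_support_coord hG hP ha
    obtain ⟨ib, hib, -, hub, hbv⟩ := mem_support_coord hG hP hb
    have hlen : (P.takeUntil b hb).length + (P.dropUntil b hb).length = P.length := by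
      rw [← Walk.length_append, P.take_spec hb]
    have hDl : (P.dropUntil b hb).length = G.dist b v := tree_path_length hG _ hD
    have hcomm : G.dist a b = G.dist b a := SimpleGraph.dist_comm
    omega

lemma isPath_append' {u v w : V} {p : G.Walk u v} {q : G.Walk v w} (hp : p.IsPath)
    (hq : q.IsPath) (h : ∀ a, a ∈ p.support → a ∈ q.support → a = v) :
    (p.append q).IsPath := by
  rw [Walk.isPath_def, Walk.support_append]
  refine List.Nodup.append hp.support_nodup hq.support_nodup.tail ?_
  intro a hap haq
  have hav : a ∈ q.support := List.mem_of_mem_tail haq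
  have hEq := h a hap hav
  subst hEq
  have hnd := hq.support_nodup
  rw [Walk.support_eq_cons] at hnd
  exact (List.nodup_cons.1 hnd).1 haq

/-- A point witnessing additivity of distances lies on the path. -/
lemma mem_path_of_dist (hG : G.IsTree) {u v z : V} {P : G.Walk u v} (hP : P.IsPath)
    (h : G.dist u z + G.dist z v = G.dist u v) : z ∈ P.support := by
  obtain ⟨Pu, hPu, -⟩ := hG.existsUnique_path u z
  obtain ⟨Pv, hPv, -⟩ := hG.existsUnique_path z v
  have hdisj : ∀ a, a ∈ Pu.support → a ∈ Pv.support → a = z := by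
    intro a ha hb
    obtain ⟨i, hi, -, h1, h2⟩ := mem_support_coord hG hPu ha
    obtain ⟨j, hj, -, h3, h4⟩ := mem_support_coord hG hPv hb
    have hl1 : Pu.length = G.dist u z := tree_path_length hG _ hPu
    have hl2 : Pv.length = G.dist z v := tree_path_length hG _ hPv
    have htri : G.dist u v ≤ G.dist u a + G.dist a v := hG.isConnected.dist_triangle
    have hcomm : G.dist a z = G.dist z a := SimpleGraph.dist_comm
    have hz : G.dist z a = 0 := by omega
    exact ((hG.isConnected.dist_eq_zero_iff).1 hz).symm
  have hW : (Pu.append Pv).IsPath := isPath_append' hPu hPv hdisj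
  have hPW : P = Pu.append Pv := (hG.existsUnique_path u v).unique hP hW
  rw [hPW]
  exact (Walk.mem_support_append_iff _ _).2 (Or.inl Pu.end_mem_support)

/-- Projection of a point onto a path in a tree. -/
lemma exists_proj (hG : G.IsTree) {u v : V} {P : G.Walk u v} (hP : P.IsPath) (w : V) :
    ∃ m, m ∈ P.support ∧ G.dist u w = G.dist u m + G.dist m w ∧
      G.dist v w = G.dist v m + G.dist m w := by
  classical
  obtain ⟨Q, hQ, -⟩ := hG.existsUnique_path w u
  set s : Finset V := Q.support.toFinset.filter (fun a => a ∈ P.support) with hs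
  have hu : u ∈ s := by
    simp only [hs, Finset.mem_filter, List.mem_toFinset]
    exact ⟨Q.end_mem_support, P.start_mem_support⟩
  obtain ⟨m, hm, hmin⟩ := s.exists_min_image (fun a => G.dist w a) ⟨u, hu⟩
  have hmQ : m ∈ Q.support := by
    simp only [hs, Finset.mem_filter, List.mem_toFinset] at hm
    exact hm.1
  have hmP : m ∈ P.support := by
    simp only [hs, Finset.mem_filter, List.mem_toFinset] at hm
    exact hm.2
  obtain ⟨i, hi, -, h1, h2⟩ := mem_support_coord hG hQ hmQ
  have hQl : Q.length = G.dist w u := tree_path_length hG _ hQ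
  have hcomm1 : G.dist u w = G.dist w u := SimpleGraph.dist_comm
  have hcomm2 : G.dist u m = G.dist m u := SimpleGraph.dist_comm
  have hcomm3 : G.dist m w = G.dist w m := SimpleGraph.dist_comm
  have hside_u : G.dist u w = G.dist u m + G.dist m w := by omega
  obtain ⟨Pwm, hPwm, hPwmu⟩ := hG.existsUnique_path w m
  have hD : (P.dropUntil m hmP).IsPath := hP.dropUntil hmP
  have hdisj : ∀ a, a ∈ Pwm.support → a ∈ (P.dropUntil m hmP).support → a = m := by
    intro a ha hb
    have hQt : Q.takeUntil m hmQ = Pwm := hPwmu _ (hQ.takeUntil hmQ)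
    have haQ : a ∈ Q.support := by
      rw [← hQt] at ha
      exact Walk.support_takeUntil_subset _ _ ha
    have haP : a ∈ P.support := Walk.support_dropUntil_subset _ _ hb
    have has : a ∈ s := by
      simp only [hs, Finset.mem_filter, List.mem_toFinset]
      exact ⟨haQ, haP⟩
    have hge := hmin a has
    obtain ⟨j, hj, -, h3, h4⟩ := mem_support_coord hG hPwm ha
    have hl : Pwm.length = G.dist w m := tree_path_length hG _ hPwm
    have hz : G.dist a m = 0 := by omega
    exact (hG.isConnected.dist_eq_zero_iff).1 hz
  have hW : (Pwm.append (P.dropUntil m hmP)).IsPath := isPath_append' hPwm hD hdisj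
  have hWl : (Pwm.append (P.dropUntil m hmP)).length = G.dist w v :=
    tree_path_length hG _ hW
  rw [Walk.length_append] at hWl
  have hl1 : Pwm.length = G.dist w m := tree_path_length hG _ hPwm
  have hl2 : (P.dropUntil m hmP).length = G.dist m v := tree_path_length hG _ hD
  have hcomm4 : G.dist v w = G.dist w v := SimpleGraph.dist_comm
  have hcomm5 : G.dist v m = G.dist m v := SimpleGraph.dist_comm
  exact ⟨m, hmP, hside_u, by omega⟩

/-- Dichotomy: geodesics from any point to a point on a path extend to one of the two
endpoints of the path. -/
lemma tree_dichotomy (hG : G.IsTree) {u v z : V} {P : G.Walk u v} (hP : P.IsPath)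
    (hz : z ∈ P.support) (w : V) :
    G.dist u z + G.dist z w = G.dist u w ∨ G.dist v z + G.dist z w = G.dist v w := by
  obtain ⟨m, hm, hm1, hm2⟩ := exists_proj hG hP w
  obtain ⟨iz, hiz, -, hz1, hz2⟩ := mem_support_coord hG hP hz
  obtain ⟨im, him, -, hm3, hm4⟩ := mem_support_coord hG hP hm
  by_cases hc : G.dist u z ≤ G.dist u m
  · left
    have hadd := dist_add_on_path hG hP hz hm hc
    have tri : G.dist z w ≤ G.dist z m + G.dist m w := hG.isConnected.dist_triangle
    have tri2 : G.dist u w ≤ G.dist u z + G.dist z w := hG.isConnected.dist_triangle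
    omega
  · right
    have hzr : z ∈ P.reverse.support := by
      rw [Walk.support_reverse]; exact List.mem_reverse.2 hz
    have hmr : m ∈ P.reverse.support := by
      rw [Walk.support_reverse]; exact List.mem_reverse.2 hm
    have hcz : G.dist v z = G.dist z v := SimpleGraph.dist_comm
    have hcm : G.dist v m = G.dist m v := SimpleGraph.dist_comm
    have hc2 : G.dist v z ≤ G.dist v m := by omega
    have hadd := dist_add_on_path hG hP.reverse hzr hmr hc2
    have tri : G.dist z w ≤ G.dist z m + G.dist m w := hG.isConnected.dist_triangle
    have tri2 : G.dist v w ≤ G.dist v z + G.dist z w := hG.isConnected.dist_triangle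
    omega

lemma iso_dist (hG : G.IsTree) (φ : G ≃g G) (u v : V) :
    G.dist (φ u) (φ v) = G.dist u v := by
  have key : ∀ (ψ : G ≃g G) (a b : V), G.dist (ψ a) (ψ b) ≤ G.dist a b := by
    intro ψ a b
    obtain ⟨w, hw⟩ := hG.isConnected.exists_walk_length_eq_dist a b
    have hle := SimpleGraph.dist_le (w.map ψ.toHom)
    rwa [Walk.length_map, hw] at hle
  refine le_antisymm (key φ u v) ?_
  have h2 := key φ.symm (φ u) (φ v)
  rwa [φ.symm_apply_apply, φ.symm_apply_apply] at h2

/-- Key geometric lemma: an automorphism moving both endpoints of a geodesic by at most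
`ε` maps deep interior vertices of the geodesic back onto the geodesic, displaced by at
most `ε`. -/
lemma key_move (hG : G.IsTree) (φ : G ≃g G) {x y : V} {P : G.Walk x y} (hP : P.IsPath)
    {ε i : ℕ} (hx : G.dist x (φ x) ≤ ε) (hy : G.dist y (φ y) ≤ ε)
    (hi1 : 2 * ε < i) (hi2 : i + 2 * ε < P.length) :
    ∃ j, j ≤ P.length ∧ i ≤ j + ε ∧ j ≤ i + ε ∧ φ (P.getVert i) = P.getVert j := by
  have hconn := hG.isConnected
  have hDd : G.dist x y = P.length := (tree_path_length hG P hP).symm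
  have hile : i ≤ P.length := by omega
  have hxp : G.dist x (P.getVert i) = i := (path_coord hG hP hile).1
  have hpy : G.dist (P.getVert i) y = P.length - i := (path_coord hG hP hile).2
  set p := P.getVert i with hpdef
  set z := φ p with hzdef
  have hgxz : G.dist (φ x) z = i := by rw [hzdef, iso_dist hG, hxp]
  have hgyz : G.dist (φ y) z = P.length - i := by
    have : G.dist (φ y) (φ p) = G.dist y p := iso_dist hG φ y p
    rw [hzdef, this, SimpleGraph.dist_comm, hpy]
  obtain ⟨m, hmP, hm1, hm2⟩ := exists_proj hG hP z
  obtain ⟨jm, hjml, hjgv, hjx, hjy⟩ := mem_support_coord hG hP hmP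
  -- triangle bounds
  have hcxz : G.dist (φ x) x = G.dist x (φ x) := SimpleGraph.dist_comm
  have hcyz : G.dist (φ y) y = G.dist y (φ y) := SimpleGraph.dist_comm
  have t1 : G.dist x z ≤ G.dist x (φ x) + G.dist (φ x) z := hconn.dist_triangle
  have t2 : G.dist (φ x) z ≤ G.dist (φ x) x + G.dist x z := hconn.dist_triangle
  have t3 : G.dist y z ≤ G.dist y (φ y) + G.dist (φ y) z := hconn.dist_triangle
  have t4 : G.dist (φ y) z ≤ G.dist (φ y) y + G.dist y z := hconn.dist_triangle
  -- m is on the geodesics from z to x and from z to y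
  obtain ⟨Pzx, hPzx, -⟩ := hG.existsUnique_path z x
  obtain ⟨Pzy, hPzy, -⟩ := hG.existsUnique_path z y
  have hcmz : G.dist z m = G.dist m z := SimpleGraph.dist_comm
  have hcxm : G.dist m x = G.dist x m := SimpleGraph.dist_comm
  have hcym : G.dist m y = G.dist y m := SimpleGraph.dist_comm
  have hczx : G.dist z x = G.dist x z := SimpleGraph.dist_comm
  have hczy : G.dist z y = G.dist y z := SimpleGraph.dist_comm
  have hmzx : m ∈ Pzx.support := mem_path_of_dist hG hPzx (by omega)
  have hmzy : m ∈ Pzy.support := mem_path_of_dist hG hPzy (by omega)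
  have L1x := tree_dichotomy hG hPzx hmzx (φ x)
  have L1y := tree_dichotomy hG hPzy hmzy (φ y)
  have hcgx : G.dist x (φ x) = G.dist (φ x) x := SimpleGraph.dist_comm
  have hcgy : G.dist y (φ y) = G.dist (φ y) y := SimpleGraph.dist_comm
  have hczgx : G.dist z (φ x) = G.dist (φ x) z := SimpleGraph.dist_comm
  have hczgy : G.dist z (φ y) = G.dist (φ y) z := SimpleGraph.dist_comm
  have hA : G.dist z m + G.dist m (φ x) = G.dist z (φ x) := by
    rcases L1x with h | h
    · exact h
    · exfalso; omega
  have hB : G.dist z m + G.dist m (φ y) = G.dist z (φ y) := by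
    rcases L1y with h | h
    · exact h
    · exfalso; omega
  have htri : G.dist (φ x) (φ y) ≤ G.dist (φ x) m + G.dist m (φ y) := hconn.dist_triangle
  have hgxy : G.dist (φ x) (φ y) = G.dist x y := iso_dist hG φ x y
  have hcmgx : G.dist (φ x) m = G.dist m (φ x) := SimpleGraph.dist_comm
  have hr0 : G.dist m z = 0 := by omega
  have hmz : m = z := (hconn.dist_eq_zero_iff).1 hr0
  refine ⟨jm, hjml, by omega, by omega, ?_⟩
  rw [← hmz, hjgv]

end TreeAux

section MainAux

open SimpleGraph

lemma ncard_biUnion_le' {α β : Type*} (F : Finset β) (f : β → Set α)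
    (hf : ∀ b, (f b).Finite) : (⋃ b ∈ F, f b).ncard ≤ ∑ b ∈ F, (f b).ncard := by
  classical
  induction F using Finset.induction with
  | empty => simp
  | @insert a F ha ih =>
    rw [Finset.set_biUnion_insert, Finset.sum_insert ha]
    exact le_trans (Set.ncard_union_le _ _) (Nat.add_le_add le_rfl ih)

end MainAux

/-- An action on a simplicial tree is acylindrical in Bowditch's sense if and only if
it is `(k, C)`-acylindrical for some integers `k ≥ 0` and `C ≥ 1`. -/
theorem bowditch_iff_kc {G : Type*} [Group G] (A : TreeAction G) :
    A.BowditchAcylindrical ↔ ∃ (k C : ℕ), 1 ≤ C ∧ A.KCAcylindrical k C := by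
  classical
  have hconn := A.isTree.isConnected
  constructor
  · intro h
    obtain ⟨R, N, hRN⟩ := h 0
    refine ⟨R, max N 1, le_max_right _ _, ?_⟩
    intro x y hxy
    have hset : {g : G | A.act g x = x ∧ A.act g y = y} =
        {g : G | A.T.dist x (A.act g x) ≤ 0 ∧ A.T.dist y (A.act g y) ≤ 0} := by
      ext g
      simp only [Set.mem_setOf_eq, Nat.le_zero, hconn.dist_eq_zero_iff]
      exact ⟨fun ⟨h1, h2⟩ => ⟨h1.symm, h2.symm⟩, fun ⟨h1, h2⟩ => ⟨h1.symm, h2.symm⟩⟩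
    rw [hset]
    obtain ⟨hf, hc⟩ := hRN x y hxy
    exact ⟨hf, hc.trans (le_max_left _ _)⟩
  · rintro ⟨k, C, hC, hKC⟩
    intro ε
    refine ⟨k + 4 * ε + 2, (2 * ε + 1) * ((2 * ε + 1) * C), ?_⟩
    intro x y hR
    obtain ⟨P, hP, -⟩ := A.isTree.existsUnique_path x y
    have hPl : P.length = A.T.dist x y := tree_path_length A.isTree P hP
    set D := P.length with hDdef
    set i₁ := 2 * ε + 1 with hi₁def
    set i₂ := D - (2 * ε + 1) with hi₂def
    have hDge : k + 4 * ε + 2 ≤ D := by omega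
    set p := P.getVert i₁ with hpdef
    set q := P.getVert i₂ with hqdef
    have hi₁le : i₁ ≤ D := by omega
    have hi₂le : i₂ ≤ D := by omega
    have hxp : A.T.dist x p = i₁ := (path_coord A.isTree hP hi₁le).1
    have hxq : A.T.dist x q = i₂ := (path_coord A.isTree hP hi₂le).1
    have hpmem : p ∈ P.support :=
      (SimpleGraph.Walk.mem_support_iff_exists_getVert).2 ⟨i₁, rfl, hi₁le⟩
    have hqmem : q ∈ P.support :=
      (SimpleGraph.Walk.mem_support_iff_exists_getVert).2 ⟨i₂, rfl, hi₂le⟩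
    have hpq : A.T.dist x q = A.T.dist x p + A.T.dist p q :=
      dist_add_on_path A.isTree hP hpmem hqmem (by omega)
    have hpqk : k ≤ A.T.dist p q := by omega
    have hstab := hKC p q hpqk
    set S := {g : G | A.T.dist x (A.act g x) ≤ ε ∧ A.T.dist y (A.act g y) ≤ ε} with hSdef
    have hkey : ∀ g ∈ S, ∃ j₁ ∈ Finset.Icc (i₁ - ε) (i₁ + ε),
        ∃ j₂ ∈ Finset.Icc (i₂ - ε) (i₂ + ε),
        A.act g p = P.getVert j₁ ∧ A.act g q = P.getVert j₂ := by
      rintro g ⟨hg1, hg2⟩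
      obtain ⟨j₁, hj₁D, hj₁a, hj₁b, hj₁e⟩ :=
        key_move A.isTree (A.act g) hP hg1 hg2 (show 2 * ε < i₁ by omega)
          (show i₁ + 2 * ε < P.length by omega)
      obtain ⟨j₂, hj₂D, hj₂a, hj₂b, hj₂e⟩ :=
        key_move A.isTree (A.act g) hP hg1 hg2 (show 2 * ε < i₂ by omega)
          (show i₂ + 2 * ε < P.length by omega)
      exact ⟨j₁, Finset.mem_Icc.2 (by omega), j₂, Finset.mem_Icc.2 (by omega),
        hj₁e, hj₂e⟩
    set F : Finset (ℕ × ℕ) :=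
      Finset.Icc (i₁ - ε) (i₁ + ε) ×ˢ Finset.Icc (i₂ - ε) (i₂ + ε) with hFdef
    set fib : ℕ × ℕ → Set G := fun jj =>
      {g : G | g ∈ S ∧ A.act g p = P.getVert jj.1 ∧ A.act g q = P.getVert jj.2}
      with hfibdef
    have hcover : S = ⋃ jj ∈ F, fib jj := by
      ext g
      simp only [Set.mem_iUnion, hfibdef, Set.mem_setOf_eq, exists_prop]
      constructor
      · intro hg
        obtain ⟨j₁, hj₁, j₂, hj₂, he₁, he₂⟩ := hkey g hg
        exact ⟨(j₁, j₂), Finset.mem_product.2 ⟨hj₁, hj₂⟩, hg, he₁, he₂⟩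
      · rintro ⟨jj, -, hg, -⟩
        exact hg
    have hfib : ∀ jj, (fib jj).Finite ∧ (fib jj).ncard ≤ C := by
      intro jj
      by_cases hne : (fib jj).Nonempty
      · obtain ⟨g₀, hg₀⟩ := hne
        have hsub2 : fib jj ⊆ (fun h => g₀ * h) ''
            {h : G | A.act h p = p ∧ A.act h q = q} := by
          intro g hg
          refine ⟨g₀⁻¹ * g, ⟨?_, ?_⟩, by group⟩
          · have e1 : A.act (g₀⁻¹ * g) p = A.act g₀⁻¹ (A.act g p) := by
              rw [map_mul]; rfl
            have e2 : A.act g₀⁻¹ (A.act g₀ p) = A.act (g₀⁻¹ * g₀) p := by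
              rw [map_mul]; rfl
            rw [e1, hg.2.1, ← hg₀.2.1, e2, inv_mul_cancel, map_one]
            rfl
          · have e1 : A.act (g₀⁻¹ * g) q = A.act g₀⁻¹ (A.act g q) := by
              rw [map_mul]; rfl
            have e2 : A.act g₀⁻¹ (A.act g₀ q) = A.act (g₀⁻¹ * g₀) q := by
              rw [map_mul]; rfl
            rw [e1, hg.2.2, ← hg₀.2.2, e2, inv_mul_cancel, map_one]
            rfl
        have hfin := hstab.1.image (fun h => g₀ * h)
        refine ⟨hfin.subset hsub2, ?_⟩
        calc (fib jj).ncard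
            ≤ ((fun h => g₀ * h) '' {h : G | A.act h p = p ∧ A.act h q = q}).ncard :=
              Set.ncard_le_ncard hsub2 hfin
          _ ≤ ({h : G | A.act h p = p ∧ A.act h q = q}).ncard :=
              Set.ncard_image_le hstab.1
          _ ≤ C := hstab.2
      · rw [Set.not_nonempty_iff_eq_empty] at hne
        simp [hne]
    constructor
    · rw [hcover]
      exact Set.Finite.biUnion F.finite_toSet (fun jj _ => (hfib jj).1)
    · rw [hcover]
      calc (⋃ jj ∈ F, fib jj).ncard
          ≤ ∑ jj ∈ F, (fib jj).ncard := ncard_biUnion_le' F fib (fun jj => (hfib jj).1)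
        _ ≤ ∑ _jj ∈ F, C := Finset.sum_le_sum (fun jj _ => (hfib jj).2)
        _ = F.card * C := by rw [Finset.sum_const, smul_eq_mul]
        _ ≤ (2 * ε + 1) * ((2 * ε + 1) * C) := by
            rw [hFdef, Finset.card_product, Nat.card_Icc, Nat.card_Icc]
            rw [← Nat.mul_assoc]
            exact Nat.mul_le_mul_right C
              (Nat.mul_le_mul (by omega) (by omega))
end

section
/- Let G = GP(Γ, 𝒢) be a graph product of groups over a finite simple graph Γ, let 𝒮 be a collection of subsets of V(Γ), and for each S ⊆ V(Γ) let G_S denote the subgroup of G generated by the vertex groups of vertices in S. Then ⋂_{S ∈ 𝒮} G_S = G_T where T = ⋂_{S ∈ 𝒮} S. -/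
section GraphProduct

variable {V : Type} [Fintype V] (Γ : SimpleGraph V) (Gv : V → Type) [∀ v, Group (Gv v)]

/-- The commutation relators defining a graph product: for each edge `{u, v}` of `Γ`,
the elements of `G_u` commute with the elements of `G_v` inside the free product. -/
def graphProductRels : Set (Monoid.CoprodI Gv) :=
  {x | ∃ (u v : V), Γ.Adj u v ∧ ∃ (a : Gv u) (b : Gv v),
    x = Monoid.CoprodI.of a * Monoid.CoprodI.of b *
      (Monoid.CoprodI.of a)⁻¹ * (Monoid.CoprodI.of b)⁻¹}

/-- The graph product of the groups `Gv` over the finite simple graph `Γ`: the free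
product of the vertex groups modulo commutation of adjacent vertex groups. -/
def GraphProduct : Type :=
  Monoid.CoprodI Gv ⧸ Subgroup.normalClosure (graphProductRels Γ Gv)

instance : Group (GraphProduct Γ Gv) :=
  inferInstanceAs (Group (Monoid.CoprodI Gv ⧸ Subgroup.normalClosure (graphProductRels Γ Gv)))

/-- The canonical map of a vertex group into the graph product. -/
def GraphProduct.of (v : V) : Gv v →* GraphProduct Γ Gv :=
  (QuotientGroup.mk' _).comp Monoid.CoprodI.of

/-- The full subgroup on a set `S` of vertices: the subgroup generated by the vertex
groups of the vertices in `S`. -/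
def GraphProduct.full (S : Set V) : Subgroup (GraphProduct Γ Gv) :=
  ⨆ v ∈ S, (GraphProduct.of Γ Gv v).range

/-- A graph product is non-degenerate if all vertex groups are nontrivial and `Γ` has
more than one vertex. -/
def GraphProduct.NonDegenerate : Prop :=
  (∀ v, Nontrivial (Gv v)) ∧ Nontrivial V

/-- The conjugate `g H g⁻¹` of a subgroup. -/
def conjSubgroup {G : Type*} [Group G] (g : G) (H : Subgroup G) : Subgroup G :=
  H.map (MulAut.conj g).toMonoidHom

/-- Edge distance at least `n` between two vertices of a graph (with the convention
that vertices in different components are at infinite distance). -/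
def SimpleGraph.distAtLeast (n : ℕ) (a b : V) : Prop :=
  a ≠ b ∧ (¬ Γ.Reachable a b ∨ n ≤ Γ.dist a b)

/-- Two vertices are separated (w.r.t. the graph product) if their edge distance is at
least 2 and the full subgroup on the intersection of their links is finite. -/
def GraphProduct.SeparatedPair (a b : V) : Prop :=
  a ≠ b ∧ ¬ Γ.Adj a b ∧
    Finite (GraphProduct.full Γ Gv (Γ.neighborSet a ∩ Γ.neighborSet b))

/-- The graph-theoretic diameter of `Γ` is at least `n`. -/
def SimpleGraph.diamAtLeast (n : ℕ) : Prop := ∃ a b : V, Γ.distAtLeast n a b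

end GraphProduct

/-!
Killing the vertex groups outside `S` respects the defining relations, which only make vertex
groups commute, so it gives a retraction of `G` onto `G_S`. It fixes `G_S` and maps `G_T` into
`G_{S ∩ T}`, whence `G_S ∩ G_T = G_{S ∩ T}`. An arbitrary intersection reduces to a finite one:
an element `g` lies in `G_F` for a finite set `F` of vertices, and if `g` lies in every `G_S` then
it lies in every `G_{F ∩ S}`, of which there are only finitely many.
-/

theorem Subgroup.exists_finset_mem_iSup {G ι : Type*} [Group G] (K : ι → Subgroup G) {x : G}
    (hx : x ∈ ⨆ i, K i) : ∃ s : Finset ι, x ∈ ⨆ i ∈ s, K i := by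
  classical
  refine Subgroup.iSup_induction K (C := fun x => ∃ s : Finset ι, x ∈ ⨆ i ∈ s, K i) hx
    (fun i x hx => ⟨{i}, by simpa using hx⟩) ⟨∅, one_mem _⟩ ?_
  rintro x y ⟨s, hs⟩ ⟨t, ht⟩
  have hst (u : Finset ι) (hu : u ⊆ s ∪ t) : ⨆ i ∈ u, K i ≤ ⨆ i ∈ s ∪ t, K i :=
    biSup_mono fun i hi => hu hi
  exact ⟨s ∪ t, mul_mem (hst s Finset.subset_union_left hs) (hst t Finset.subset_union_right ht)⟩

namespace GraphProduct

open Monoid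

variable {V : Type} {Γ : SimpleGraph V} {Gv : V → Type} [∀ v, Group (Gv v)]

theorem commute_of_of_adj {u v : V} (huv : Γ.Adj u v) (a : Gv u) (b : Gv v) :
    Commute (of Γ Gv u a) (of Γ Gv v b) := by
  have hrel : CoprodI.of a * CoprodI.of b * (CoprodI.of a)⁻¹ * (CoprodI.of b)⁻¹ ∈
      Subgroup.normalClosure (graphProductRels Γ Gv) :=
    Subgroup.subset_normalClosure ⟨u, v, huv, a, b, rfl⟩
  rw [← commutatorElement_eq_one_iff_commute, commutatorElement_def]
  exact (QuotientGroup.eq_one_iff _).2 hrel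

/-- The universal property of the graph product. -/
def lift {H : Type*} [Group H] (φ : ∀ v, Gv v →* H)
    (hφ : ∀ u v, Γ.Adj u v → ∀ (a : Gv u) (b : Gv v), Commute (φ u a) (φ v b)) :
    GraphProduct Γ Gv →* H :=
  QuotientGroup.lift _ (CoprodI.lift φ) <| Subgroup.normalClosure_le_normal <| by
    rintro _ ⟨u, v, huv, a, b, rfl⟩
    simpa [commutatorElement_def] using commutatorElement_eq_one_iff_commute.2 (hφ u v huv a b)

@[simp]
theorem lift_of {H : Type*} [Group H] (φ : ∀ v, Gv v →* H)
    (hφ : ∀ u v, Γ.Adj u v → ∀ (a : Gv u) (b : Gv v), Commute (φ u a) (φ v b))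
    (v : V) (a : Gv v) : lift φ hφ (of Γ Gv v a) = φ v a :=
  CoprodI.lift_of φ a

open scoped Classical in
/-- The retraction of the graph product onto the full subgroup on `S`, killing the other
vertex groups. -/
noncomputable def retract (S : Set V) : GraphProduct Γ Gv →* GraphProduct Γ Gv :=
  lift (fun v => if v ∈ S then of Γ Gv v else 1) fun u v huv a b => by
    by_cases hu : u ∈ S <;> by_cases hv : v ∈ S <;> simp [hu, hv, commute_of_of_adj huv]

open scoped Classical in
theorem retract_of (S : Set V) (v : V) (a : Gv v) :
    retract S (of Γ Gv v a) = if v ∈ S then of Γ Gv v a else 1 := by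
  by_cases hv : v ∈ S <;> simp [retract, hv]

theorem full_le_iff {S : Set V} {H : Subgroup (GraphProduct Γ Gv)} :
    full Γ Gv S ≤ H ↔ ∀ v ∈ S, ∀ a : Gv v, of Γ Gv v a ∈ H := by
  simp only [full, iSup₂_le_iff]
  exact forall₂_congr fun v _ => ⟨fun h a => h ⟨a, rfl⟩, by rintro h _ ⟨a, rfl⟩; exact h a⟩

theorem full_mono {S T : Set V} (hST : S ⊆ T) : full Γ Gv S ≤ full Γ Gv T :=
  biSup_mono hST

theorem of_mem_full {S : Set V} {v : V} (hv : v ∈ S) (a : Gv v) : of Γ Gv v a ∈ full Γ Gv S :=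
  full_le_iff.1 le_rfl v hv a

theorem retract_eq_self {S : Set V} {g : GraphProduct Γ Gv} (hg : g ∈ full Γ Gv S) :
    retract S g = g := by
  have : full Γ Gv S ≤ MonoidHom.eqLocus (retract S) (MonoidHom.id _) :=
    full_le_iff.2 fun v hv a => (retract_of S v a).trans (if_pos hv)
  exact this hg

theorem retract_mem_full_inter {S T : Set V} {g : GraphProduct Γ Gv} (hg : g ∈ full Γ Gv T) :
    retract S g ∈ full Γ Gv (S ∩ T) := by
  have : full Γ Gv T ≤ (full Γ Gv (S ∩ T)).comap (retract S) := by
    refine full_le_iff.2 fun v hvT a => ?_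
    by_cases hvS : v ∈ S
    · simpa [retract_of, hvS] using of_mem_full (S := S ∩ T) ⟨hvS, hvT⟩ a
    · simp [retract_of, hvS]
  exact this hg

theorem full_inter (S T : Set V) : full Γ Gv (S ∩ T) = full Γ Gv S ⊓ full Γ Gv T := by
  refine le_antisymm (le_inf (full_mono Set.inter_subset_left) (full_mono Set.inter_subset_right))
    fun g ⟨hgS, hgT⟩ => ?_
  simpa [retract_eq_self hgS] using retract_mem_full_inter (S := S) hgT

theorem full_univ : full Γ Gv Set.univ = ⊤ := by
  rw [eq_top_iff]
  rintro g -
  obtain ⟨x, rfl⟩ := QuotientGroup.mk'_surjective _ g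
  induction x using CoprodI.induction_on with
  | one => exact one_mem _
  | of v a => exact of_mem_full (Set.mem_univ v) a
  | mul x y hx hy => exact mul_mem hx hy

theorem full_sInter_of_finite {𝒯 : Set (Set V)} (h𝒯 : 𝒯.Finite) :
    full Γ Gv (⋂₀ 𝒯) = ⨅ S ∈ 𝒯, full Γ Gv S := by
  induction 𝒯, h𝒯 using Set.Finite.induction_on with
  | empty => rw [Set.sInter_empty, iInf_emptyset, full_univ]
  | insert _ _ ih => rw [Set.sInter_insert, iInf_insert, full_inter, ih]

theorem exists_finset_mem_full (g : GraphProduct Γ Gv) : ∃ F : Finset V, g ∈ full Γ Gv F := by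
  have hg : g ∈ ⨆ v, (of Γ Gv v).range := by
    simpa [full] using (full_univ (Γ := Γ) (Gv := Gv)).ge (Subgroup.mem_top g)
  exact Subgroup.exists_finset_mem_iSup _ hg

end GraphProduct

open GraphProduct in
theorem full_subgroups_inf_general {V : Type} (Γ : SimpleGraph V) (Gv : V → Type)
    [∀ v, Group (Gv v)] (𝒮 : Set (Set V)) :
    (⨅ S ∈ 𝒮, GraphProduct.full Γ Gv S) = GraphProduct.full Γ Gv (⋂₀ 𝒮) := by
  refine le_antisymm (fun g hg => ?_) (le_iInf₂ fun S hS => full_mono (Set.sInter_subset_of_mem hS))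
  simp only [Subgroup.mem_iInf] at hg
  obtain ⟨F, hF⟩ := exists_finset_mem_full g
  -- Cutting every `S` down to the finite set `F` leaves only finitely many sets to intersect.
  set 𝒯 := (fun S => (F : Set V) ∩ S) '' 𝒮
  have h𝒯 : 𝒯.Finite := F.finite_toSet.finite_subsets.subset <| by
    rintro _ ⟨S, -, rfl⟩
    exact Set.inter_subset_left
  have hg𝒯 : g ∈ full Γ Gv (⋂₀ 𝒯) := by
    simp only [full_sInter_of_finite h𝒯, Subgroup.mem_iInf]
    rintro _ ⟨S, hS, rfl⟩
    rw [full_inter]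
    exact ⟨hF, hg S hS⟩
  refine full_mono (fun x hx S hS => ?_) hg𝒯
  exact (hx _ ⟨S, hS, rfl⟩).2

/-- In a graph product, the intersection of an arbitrary collection of full subgroups
is the full subgroup on the intersection of the corresponding vertex sets. -/
theorem full_subgroups_inf {V : Type} [Fintype V] (Γ : SimpleGraph V) (Gv : V → Type)
    [∀ v, Group (Gv v)] (𝒮 : Set (Set V)) :
    (⨅ S ∈ 𝒮, GraphProduct.full Γ Gv S) = GraphProduct.full Γ Gv (⋂₀ 𝒮) :=
  full_subgroups_inf_general Γ Gv 𝒮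
end

section
/- Let G = GP(Γ, 𝒢) be a graph product of groups in which every vertex group is nontrivial. If U, W ⊆ V(Γ) and g₁, g₂ ∈ G satisfy g₁ G_U g₁⁻¹ ≤ g₂ G_W g₂⁻¹, then U ⊆ W. -/
section Aux

variable {V : Type} [Fintype V] (Γ : SimpleGraph V) (Gv : V → Type) [∀ v, Group (Gv v)]

/-- Cast homomorphism along an equality of vertices. -/
def eqHom : ∀ {v u : V}, v = u → (Gv v →* Gv u)
  | _, _, rfl => MonoidHom.id _

open Classical in
/-- The map from a vertex group `Gv v` to `Gv u`: identity if `v = u`, trivial else. -/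
noncomputable def phiAux (u v : V) : Gv v →* Gv u :=
  if h : v = u then eqHom Gv h else 1

lemma phiAux_self (u : V) (a : Gv u) : phiAux Gv u u a = a := by
  unfold phiAux
  rw [dif_pos rfl]
  rfl

lemma phiAux_ne (u v : V) (hvu : v ≠ u) (a : Gv v) : phiAux Gv u v a = 1 := by
  unfold phiAux
  rw [dif_neg hvu]
  rfl

/-- Retraction from the graph product onto the vertex group of `u`. -/
noncomputable def projAux (u : V) : GraphProduct Γ Gv →* Gv u :=
  QuotientGroup.lift _ (Monoid.CoprodI.lift (phiAux Gv u)) (by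
    apply Subgroup.normalClosure_le_normal
    rintro x ⟨a, b, hadj, x₁, x₂, rfl⟩
    have hab : a ≠ b := hadj.ne
    simp only [SetLike.mem_coe, MonoidHom.mem_ker, map_mul, map_inv,
      Monoid.CoprodI.lift_of]
    by_cases ha : a = u
    · have hb : b ≠ u := by rintro rfl; exact hab ha
      rw [phiAux_ne Gv u b hb x₂]
      group
    · rw [phiAux_ne Gv u a ha x₁]
      group)

lemma projAux_of (u v : V) (a : Gv v) :
    projAux Γ Gv u (GraphProduct.of Γ Gv v a) = phiAux Gv u v a := by
  rfl

lemma projAux_full_eq_one (u : V) (W : Set V) (hu : u ∉ W) :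
    ∀ x ∈ GraphProduct.full Γ Gv W, projAux Γ Gv u x = 1 := by
  intro x hx
  have : GraphProduct.full Γ Gv W ≤ (projAux Γ Gv u).ker := by
    refine iSup₂_le fun v hv => ?_
    rintro _ ⟨a, rfl⟩
    have hvu : v ≠ u := by rintro rfl; exact hu hv
    simp [MonoidHom.mem_ker, projAux_of, phiAux_ne Gv u v hvu]
  exact this hx

end Aux

/-- In a graph product with nontrivial vertex groups, if a conjugate of the full
subgroup on `U` is contained in a conjugate of the full subgroup on `W`, then
`U ⊆ W`. -/
theorem conj_full_le_conj_full {V : Type} [Fintype V] (Γ : SimpleGraph V) (Gv : V → Type)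
    [∀ v, Group (Gv v)] (hnontr : ∀ v, Nontrivial (Gv v))
    (U W : Set V) (g₁ g₂ : GraphProduct Γ Gv)
    (h : conjSubgroup g₁ (GraphProduct.full Γ Gv U) ≤
      conjSubgroup g₂ (GraphProduct.full Γ Gv W)) :
    U ⊆ W := by
  intro u hu
  by_contra huW
  obtain ⟨a, ha⟩ := exists_ne (1 : Gv u)
  -- the conjugated element
  have hmem : g₁ * GraphProduct.of Γ Gv u a * g₁⁻¹ ∈
      conjSubgroup g₁ (GraphProduct.full Γ Gv U) := by
    refine ⟨GraphProduct.of Γ Gv u a, ?_, rfl⟩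
    have hle : (GraphProduct.of Γ Gv u).range ≤ GraphProduct.full Γ Gv U :=
      le_iSup₂ (f := fun v (_ : v ∈ U) => (GraphProduct.of Γ Gv v).range) u hu
    exact hle ⟨a, rfl⟩
  obtain ⟨w, hw, hweq⟩ := h hmem
  have hproj : projAux Γ Gv u (g₂ * w * g₂⁻¹) = 1 := by
    rw [map_mul, map_mul, map_inv, projAux_full_eq_one Γ Gv u W huW w hw]
    group
  have : projAux Γ Gv u (g₂ * w * g₂⁻¹) =
      projAux Γ Gv u g₁ * a * (projAux Γ Gv u g₁)⁻¹ := by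
    have : (g₂ : GraphProduct Γ Gv) * w * g₂⁻¹ = g₁ * GraphProduct.of Γ Gv u a * g₁⁻¹ := hweq
    rw [this, map_mul, map_mul, map_inv, projAux_of, phiAux_self]
  rw [this] at hproj
  apply ha
  have h2 : a = (projAux Γ Gv u g₁)⁻¹ *
      (projAux Γ Gv u g₁ * a * (projAux Γ Gv u g₁)⁻¹) * projAux Γ Gv u g₁ := by group
  rw [hproj] at h2
  simpa using h2
end

section
/- Let G be an acylindrically arboreal group and let N ⊴ G be a finite normal subgroup. Then the quotient G/N is acylindrically arboreal. Conversely, if Q is acylindrically arboreal and 1 → F → G → Q → 1 is an extension with F finite, then G is acylindrically arboreal. -/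
/-!
Along a surjection `π : G → Q` with finite kernel, `G` acts on the tree of `Q` through `π`: the
orbits are the same, and since the fibres of `π` are cosets of `ker π`, stabilisers of pairs of
points grow by the factor `|ker π|` at most.

For a finite normal subgroup `N`, `G ⧸ N` acts on the graph `T/N` of `N`-orbits. It is a tree: a
cycle of `T/N` lifts to a non-backtracking, hence injective, sequence in `T` that returns infinitely
often to a finite `N`-orbit. Distances do not grow in `T/N`, and geodesics of `T/N` lift to `T` up
to moving an endpoint by `N`; hence orbits stay unbounded, and the stabiliser of two orbits
`N • x`, `N • y` is the image of the set of `g` with `g • x ∈ N • x` and `g • y ∈ N • y`, which is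
covered by `|N|²` cosets of the stabiliser of `(x, y)`.

Virtual cyclicity passes to images, and back along finite kernels.
-/

open Function SimpleGraph MulAction

namespace SimpleGraph

variable {V W : Type*} {G : SimpleGraph V}

theorem Iso.dist_eq {G' : SimpleGraph W} (e : G ≃g G') (hG : G.Connected) (u v : V) :
    G'.dist (e u) (e v) = G.dist u v := by
  refine le_antisymm ?_ ?_
  · obtain ⟨p, hp⟩ := hG.exists_walk_length_eq_dist u v
    simpa [hp] using dist_le (p.map e.toHom)
  · obtain ⟨q, hq⟩ := (hG.map e.toHom e.surjective).exists_walk_length_eq_dist (e u) (e v)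
    simpa [hq] using dist_le (q.map e.symm.toHom)

theorem Walk.exists_walk_map_length_le (f : V → W) {u v : V} (p : G.Walk u v) :
    ∃ q : (G.map f).Walk (f u) (f v), q.length ≤ p.length := by
  induction p with
  | nil => exact ⟨nil, le_rfl⟩
  | @cons u v w h p ih =>
    obtain ⟨q, hq⟩ := ih
    by_cases huv : f u = f v
    · exact ⟨q.copy huv.symm rfl, by simp only [length_copy, length_cons]; omega⟩
    · exact ⟨cons (map_adj_apply' h huv) q, by simp only [length_cons]; omega⟩

theorem Connected.map_of_surjective (hG : G.Connected) {f : V → W} (hf : Surjective f) :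
    (G.map f).Connected := by
  have := hG.nonempty.map f
  refine ⟨fun a b => ?_⟩
  obtain ⟨x, rfl⟩ := hf a
  obtain ⟨y, rfl⟩ := hf b
  obtain ⟨q, -⟩ := (hG.preconnected x y).some.exists_walk_map_length_le f
  exact q.reachable

theorem Connected.dist_map_le_s15 (hG : G.Connected) (f : V → W) (u v : V) :
    (G.map f).dist (f u) (f v) ≤ G.dist u v := by
  obtain ⟨p, hp⟩ := hG.exists_walk_length_eq_dist u v
  obtain ⟨q, hq⟩ := p.exists_walk_map_length_le f
  exact (dist_le q).trans (hp ▸ hq)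

namespace Walk

variable {u : V}

theorem getVert_mod_length (c : G.Walk u u) {i : ℕ} (hi : i ≤ c.length) :
    c.getVert (i % c.length) = c.getVert i := by
  rcases hi.lt_or_eq with hi | rfl
  · rw [Nat.mod_eq_of_lt hi]
  · rw [Nat.mod_self, getVert_zero, getVert_length]

theorem adj_getVert_mod_length (c : G.Walk u u) (hc : c.length ≠ 0) (i : ℕ) :
    G.Adj (c.getVert (i % c.length)) (c.getVert ((i + 1) % c.length)) := by
  have hi := Nat.mod_lt i (Nat.pos_of_ne_zero hc)
  rw [← Nat.mod_add_mod, c.getVert_mod_length hi]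
  exact c.adj_getVert_succ hi

theorem IsCycle.getVert_mod_length_add_two_ne {c : G.Walk u u} (hc : c.IsCycle) (i : ℕ) :
    c.getVert ((i + 2) % c.length) ≠ c.getVert (i % c.length) := by
  have hL := hc.three_le_length
  have hi := Nat.mod_lt i (by omega : 0 < c.length)
  rw [← Nat.mod_add_mod]
  rcases (by omega : i % c.length + 2 ≤ c.length ∨ i % c.length + 1 = c.length) with hle | heq
  · rw [c.getVert_mod_length hle]
    exact (hc.getVert_sub_one_ne_getVert_add_one (i := i % c.length + 1) (by omega)).symm
  · rw [show i % c.length + 2 = 1 + 1 * c.length by omega, Nat.add_mul_mod_self_right,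
      Nat.mod_eq_of_lt (by omega), show i % c.length = c.length - 1 by omega]
    exact hc.snd_ne_penultimate

end Walk

theorem IsAcyclic.exists_isPath_getVert_eq (hG : G.IsAcyclic) {x : ℕ → V}
    (hadj : ∀ i, G.Adj (x i) (x (i + 1))) (hx : ∀ i, x (i + 2) ≠ x i) (m : ℕ) :
    ∃ p : G.Walk (x 0) (x m), p.IsPath ∧ p.length = m ∧ ∀ i ≤ m, p.getVert i = x i := by
  induction m with
  | zero => exact ⟨.nil, .nil, rfl, fun i hi => by simp [Nat.le_zero.mp hi]⟩
  | succ m ih =>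
    obtain ⟨p, hp, hlen, hget⟩ := ih
    have hnew : x (m + 1) ∉ p.support := by
      intro hmem
      have hpen := hG.eq_penultimate_of_adj_end hp (hadj m) hmem
      rw [Walk.penultimate, hlen, hget _ (Nat.sub_le m 1)] at hpen
      rcases m with - | m
      · exact (hadj 0).ne hpen.symm
      · exact hx m hpen
    refine ⟨p.concat (hadj m), hp.concat hnew (hadj m), by simp [hlen], fun i hi => ?_⟩
    rw [Walk.concat_eq_append, Walk.getVert_append, hlen]
    split_ifs with hlt
    · exact hget i hlt.le
    · obtain rfl | rfl : i = m ∨ i = m + 1 := by omega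
      all_goals simp

theorem IsAcyclic.injective_of_adj_of_ne {x : ℕ → V} (hG : G.IsAcyclic)
    (hadj : ∀ i, G.Adj (x i) (x (i + 1))) (hx : ∀ i, x (i + 2) ≠ x i) : Injective x := by
  intro i j hij
  obtain ⟨p, hp, hlen, hget⟩ := hG.exists_isPath_getVert_eq hadj hx (max i j)
  refine hp.getVert_injOn (by simp only [Set.mem_ofPred_eq]; omega)
    (by simp only [Set.mem_ofPred_eq]; omega) ?_
  rw [hget i (le_max_left i j), hget j (le_max_right i j), hij]

end SimpleGraph

theorem exists_seq_lift {α β : Type*} (f : α → β) {r : β → β → Prop} {s : α → α → Prop}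
    (hlift : ∀ x b, r (f x) b → ∃ y, s x y ∧ f y = b) {b : ℕ → β}
    (hb : ∀ i, r (b i) (b (i + 1))) {x₀ : α} (hx₀ : f x₀ = b 0) :
    ∃ x : ℕ → α, ∀ i, f (x i) = b i ∧ s (x i) (x (i + 1)) := by
  choose! next hnext using hlift
  let x : ℕ → α := fun n => Nat.rec x₀ (fun i xi => next xi (b (i + 1))) n
  have hx : ∀ i, f (x i) = b i := by
    intro i
    induction i with
    | zero => exact hx₀
    | succ i ih => exact (hnext _ _ (ih ▸ hb i)).2
  exact ⟨x, fun i => ⟨hx i, (hnext _ _ ((hx i).symm ▸ hb i)).1⟩⟩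

theorem Set.finite_and_ncard_le_of_inv_mul_mem {G β : Type*} [Group G] {f : G → β}
    {s K : Set G} {t : Set β} (ht : t.Finite) (hK : K.Finite) (hst : MapsTo f s t)
    (hf : ∀ a ∈ s, ∀ b ∈ s, f a = f b → a⁻¹ * b ∈ K) : s.Finite ∧ s.ncard ≤ t.ncard * K.ncard := by
  classical
  have hσ : ∀ a ∈ s, invFunOn f s (f a) ∈ s ∧ f (invFunOn f s (f a)) = f a :=
    fun a ha => ⟨invFunOn_mem ⟨a, ha, rfl⟩, invFunOn_eq ⟨a, ha, rfl⟩⟩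
  let Φ : s → t × K := fun a =>
    (⟨f a, hst a.2⟩, ⟨(invFunOn f s (f a))⁻¹ * a, hf _ (hσ a a.2).1 _ a.2 (hσ a a.2).2⟩)
  have hΦ : Injective Φ := by
    intro a b hab
    simp only [Φ, Prod.mk.injEq, Subtype.mk.injEq] at hab
    obtain ⟨h1, h2⟩ := hab
    rw [h1] at h2
    exact Subtype.ext (mul_left_cancel h2)
  have := ht.to_subtype
  have := hK.to_subtype
  have : Finite s := Finite.of_injective Φ hΦ
  refine ⟨s.toFinite, ?_⟩
  rw [← Nat.card_coe_set_eq, ← Nat.card_coe_set_eq t, ← Nat.card_coe_set_eq K, ← Nat.card_prod]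
  exact Nat.card_le_card_of_injective Φ hΦ

namespace Subgroup

open scoped Pointwise

variable {G Q : Type*} [Group G] [Group Q]

theorem relIndex_normal_sup_ne_zero (N K : Subgroup G) [N.Normal] [Finite N] :
    K.relIndex (N ⊔ K) ≠ 0 := by
  have hsurj : Surjective fun n : N =>
      (QuotientGroup.mk ⟨n, le_sup_left (a := N) n.2⟩ : ↥(N ⊔ K) ⧸ K.subgroupOf (N ⊔ K)) := by
    intro q
    induction q using QuotientGroup.induction_on with
    | H x =>
      have hx : (x : G) ∈ (N : Set G) * (K : Set G) := normal_mul N K ▸ SetLike.mem_coe.mpr x.2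
      obtain ⟨n, hn, k, hk, hx⟩ := hx
      refine ⟨⟨n, hn⟩, QuotientGroup.eq.mpr ?_⟩
      simpa [mem_subgroupOf, ← hx] using hk
  have := Finite.of_surjective _ hsurj
  exact index_ne_zero_of_finite

theorem finiteIndex_of_finiteIndex_map {π : G →* Q} [Finite π.ker]
    {K : Subgroup G} (hK : (K.map π).FiniteIndex) : K.FiniteIndex := by
  have hsup : (π.ker ⊔ K).index ≠ 0 := by
    intro h
    apply hK.index_ne_zero
    rw [index_map, sup_comm, h, zero_mul]
  rw [finiteIndex_iff, ← relIndex_mul_index (le_sup_right : K ≤ π.ker ⊔ K)]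
  exact mul_ne_zero (relIndex_normal_sup_ne_zero π.ker K) hsup

end Subgroup

section VirtuallyCyclic

variable {G Q : Type*} [Group G] [Group Q] {π : G →* Q}

theorem IsVirtuallyCyclic.of_surjective (hπ : Surjective π) (h : IsVirtuallyCyclic G) :
    IsVirtuallyCyclic Q := by
  obtain ⟨H, hH, hcyc⟩ := h
  obtain ⟨g, rfl⟩ := H.isCyclic_iff_exists_zpowers_eq_top.mp hcyc
  refine ⟨(Subgroup.zpowers g).map π, ⟨fun h0 => hH.index_ne_zero ?_⟩, ?_⟩
  · exact Nat.eq_zero_of_zero_dvd (h0 ▸ Subgroup.index_map_dvd _ hπ)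
  · rw [MonoidHom.map_zpowers]
    infer_instance

theorem IsVirtuallyCyclic.of_finite_ker (hπ : Surjective π) [Finite π.ker]
    (h : IsVirtuallyCyclic Q) : IsVirtuallyCyclic G := by
  obtain ⟨H, hH, hcyc⟩ := h
  obtain ⟨q, rfl⟩ := H.isCyclic_iff_exists_zpowers_eq_top.mp hcyc
  obtain ⟨g, rfl⟩ := hπ q
  rw [← MonoidHom.map_zpowers] at hH
  exact ⟨_, Subgroup.finiteIndex_of_finiteIndex_map hH, inferInstance⟩

end VirtuallyCyclic

def MulAction.toGraphIsoHom {H W : Type*} [Group H] [MulAction H W] (Q : SimpleGraph W)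
    (hQ : ∀ (g : H) {a b : W}, Q.Adj a b → Q.Adj (g • a) (g • b)) : H →* (Q ≃g Q) where
  toFun g :=
    { toEquiv := MulAction.toPerm g
      map_rel_iff' := ⟨fun h => by simpa using hQ g⁻¹ h, hQ g⟩ }
  map_one' := RelIso.ext (one_smul H)
  map_mul' g h := RelIso.ext (mul_smul g h)

section OrbitQuotient

variable {G α : Type*} [Group G] [MulAction G α] (N : Subgroup G) [N.Normal]

instance : MulAction (G ⧸ N) (orbitRel.Quotient N α) where
  smul := Quotient.map₂ (· • ·) fun g g' hg x x' hx => by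
    obtain ⟨n, rfl⟩ := hx
    have hconj : g * n * g'⁻¹ = (g * n * g⁻¹) * (g * (g⁻¹ * g')⁻¹ * g⁻¹) := by group
    refine ⟨⟨g * n * g'⁻¹, hconj ▸ N.mul_mem (‹N.Normal›.conj_mem _ n.2 g)
      (‹N.Normal›.conj_mem _ (N.inv_mem (QuotientGroup.leftRel_apply.mp hg)) g)⟩, ?_⟩
    simp [Subgroup.smul_def, smul_smul]
  one_smul := by
    rintro ⟨x⟩
    exact congrArg (Quotient.mk _) (one_smul G x)
  mul_smul := by
    rintro ⟨g⟩ ⟨h⟩ ⟨x⟩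
    exact congrArg (Quotient.mk _) (mul_smul g h x)

end OrbitQuotient

namespace TreeAction

variable {G : Type*} [Group G] (A : TreeAction G)

instance : MulAction G A.V := MulAction.compHom A.V A.act

theorem adj_smul_iff (g : G) {x y : A.V} : A.T.Adj (g • x) (g • y) ↔ A.T.Adj x y :=
  (A.act g).map_adj_iff

theorem dist_smul (g : G) (x y : A.V) : A.T.dist (g • x) (g • y) = A.T.dist x y :=
  Iso.dist_eq (A.act g) A.isTree.connected x y

section OrbitGraph

variable (N : Subgroup G)

abbrev orbitGraph : SimpleGraph (orbitRel.Quotient N A.V) :=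
  A.T.map (Quotient.mk _)

variable {A N}

theorem mk_eq_mk_iff {x y : A.V} :
    (⟦x⟧ : orbitRel.Quotient N A.V) = ⟦y⟧ ↔ ∃ n : N, n • y = x :=
  Quotient.eq

theorem exists_adj_lift (x : A.V) (b : orbitRel.Quotient N A.V)
    (h : (A.orbitGraph N).Adj ⟦x⟧ b) : ∃ y, A.T.Adj x y ∧ ⟦y⟧ = b := by
  obtain ⟨-, u, v, huv, hu, rfl⟩ := h
  obtain ⟨n, rfl⟩ := mk_eq_mk_iff.mp hu
  refine ⟨(n⁻¹ : N) • v, ?_, orbitRel.Quotient.quotient_smul_eq⟩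
  rwa [← A.adj_smul_iff (n : G), ← Subgroup.smul_def, ← Subgroup.smul_def, smul_inv_smul]

theorem exists_walk_lift {a b : orbitRel.Quotient N A.V} (p : (A.orbitGraph N).Walk a b)
    (x : A.V) (hx : ⟦x⟧ = a) : ∃ (y : A.V) (w : A.T.Walk x y), ⟦y⟧ = b ∧ w.length = p.length := by
  induction p generalizing x with
  | nil => exact ⟨x, .nil, hx, rfl⟩
  | cons h p ih =>
    subst hx
    obtain ⟨y, hxy, rfl⟩ := exists_adj_lift x _ h
    obtain ⟨z, w, hz, hw⟩ := ih y rfl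
    exact ⟨z, .cons hxy w, hz, by simp [hw]⟩

theorem exists_dist_smul_le (x y : A.V) :
    ∃ n : N, A.T.dist x (n • y) ≤ (A.orbitGraph N).dist ⟦x⟧ ⟦y⟧ := by
  have hconn : (A.orbitGraph N).Connected :=
    A.isTree.connected.map_of_surjective Quotient.mk_surjective
  obtain ⟨p, hp⟩ := hconn.exists_walk_length_eq_dist ⟦x⟧ ⟦y⟧
  obtain ⟨y', w, hy', hw⟩ := exists_walk_lift p x rfl
  obtain ⟨n, rfl⟩ := mk_eq_mk_iff.mp hy'
  exact ⟨n, (dist_le w).trans (hw.trans hp).le⟩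

theorem orbitGraph_isAcyclic [Finite N] : (A.orbitGraph N).IsAcyclic := by
  intro a c hc
  have hL : c.length ≠ 0 := by have := hc.three_le_length; omega
  obtain ⟨x₀, hx₀⟩ := Quotient.exists_rep (c.getVert (0 % c.length))
  obtain ⟨x, hx⟩ := exists_seq_lift _ exists_adj_lift (c.adj_getVert_mod_length hL) hx₀
  have hinj : Injective x := A.isTree.isAcyclic.injective_of_adj_of_ne
    (fun i => (hx i).2) fun i h => hc.getVert_mod_length_add_two_ne i (by
      rw [← (hx i).1, ← (hx (i + 2)).1, h])
  have hmem (j : ℕ) : x (j * c.length) ∈ Set.range fun n : N => n • x 0 := by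
    refine mk_eq_mk_iff.mp ((hx _).1.trans ?_)
    rw [(hx 0).1, Nat.mul_mod_left, Nat.zero_mod]
  exact Set.infinite_range_of_injective (hinj.comp (mul_left_injective₀ hL))
    ((Set.finite_range _).subset (Set.range_subset_iff.mpr hmem))

end OrbitGraph

section Quotient

variable (N : Subgroup G) [N.Normal]

theorem orbitGraph_adj_smul (q : G ⧸ N) {a b : orbitRel.Quotient N A.V}
    (h : (A.orbitGraph N).Adj a b) : (A.orbitGraph N).Adj (q • a) (q • b) := by
  obtain ⟨hab, u, v, huv, rfl, rfl⟩ := h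
  obtain ⟨g, rfl⟩ := QuotientGroup.mk_surjective q
  exact ⟨(MulAction.injective _).ne hab, g • u, g • v, (A.adj_smul_iff g).mpr huv, rfl, rfl⟩

def quotient [Finite N] : TreeAction (G ⧸ N) where
  V := orbitRel.Quotient N A.V
  T := A.orbitGraph N
  isTree := ⟨A.isTree.connected.map_of_surjective Quotient.mk_surjective,
    A.orbitGraph_isAcyclic⟩
  act := MulAction.toGraphIsoHom _ (A.orbitGraph_adj_smul N)

variable {A N} [Finite N]

theorem KCAcylindrical.quotient {k C : ℕ} (h : A.KCAcylindrical k C) :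
    (A.quotient N).KCAcylindrical k (Nat.card N * Nat.card N * C) := by
  rintro ⟨x⟩ ⟨y⟩ hxy
  obtain ⟨hfin, hcard⟩ := h x y (hxy.trans (A.isTree.connected.dist_map_le_s15 _ x y))
  set s : Set G := {g | (⟦g • x⟧ : orbitRel.Quotient N A.V) = ⟦x⟧ ∧
    (⟦g • y⟧ : orbitRel.Quotient N A.V) = ⟦y⟧}
  have hsub : {q : G ⧸ N | (A.quotient N).act q ⟦x⟧ = ⟦x⟧ ∧ (A.quotient N).act q ⟦y⟧ = ⟦y⟧} ⊆
      QuotientGroup.mk '' s := by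
    intro q hq
    obtain ⟨g, rfl⟩ := QuotientGroup.mk_surjective q
    exact ⟨g, hq, rfl⟩
  obtain ⟨hs, hscard⟩ := Set.finite_and_ncard_le_of_inv_mul_mem (s := s)
    (f := fun g : G => (g • x, g • y)) (Set.finite_range fun p : N × N => (p.1 • x, p.2 • y)) hfin
    (fun g ⟨hgx, hgy⟩ => by
      obtain ⟨n, hn⟩ := mk_eq_mk_iff.mp hgx
      obtain ⟨m, hm⟩ := mk_eq_mk_iff.mp hgy
      exact ⟨(n, m), Prod.ext hn hm⟩)
    (fun g _ g' _ hgg' => by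
      obtain ⟨hx, hy⟩ := Prod.mk.inj hgg'
      exact ⟨show (g⁻¹ * g') • x = x by rw [mul_smul, ← hx, inv_smul_smul],
        show (g⁻¹ * g') • y = y by rw [mul_smul, ← hy, inv_smul_smul]⟩)
  have hrange :
      (Set.range fun p : N × N => (p.1 • x, p.2 • y)).ncard ≤ Nat.card N * Nat.card N := by
    rw [← Nat.card_coe_set_eq, ← Nat.card_prod]
    exact Finite.card_range_le _
  refine ⟨(hs.image _).subset hsub, ?_⟩
  calc _ ≤ (QuotientGroup.mk '' s : Set (G ⧸ N)).ncard := Set.ncard_le_ncard hsub (hs.image _)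
    _ ≤ s.ncard := Set.ncard_image_le hs
    _ ≤ _ := hscard
    _ ≤ _ := Nat.mul_le_mul hrange hcard

theorem BoundedOrbits.of_quotient (h : (A.quotient N).BoundedOrbits) : A.BoundedOrbits := by
  obtain ⟨⟨x⟩, B, hB⟩ := h
  obtain ⟨M, hM⟩ := (Set.finite_range fun n : N => A.T.dist x (n • x)).bddAbove
  refine ⟨x, M + B, fun g => ?_⟩
  obtain ⟨n, hn⟩ := exists_dist_smul_le (N := N) x (g • x)
  have hnx : A.T.dist (n⁻¹ • x) (g • x) ≤ B := by
    rw [← A.dist_smul n, ← Subgroup.smul_def, smul_inv_smul, ← Subgroup.smul_def]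
    exact hn.trans (hB g)
  calc A.T.dist x (g • x) ≤ A.T.dist x (n⁻¹ • x) + A.T.dist (n⁻¹ • x) (g • x) :=
        A.isTree.connected.dist_triangle
    _ ≤ M + B := add_le_add (hM ⟨n⁻¹, rfl⟩) hnx

end Quotient

end TreeAction

theorem AcylindricallyArboreal.quotient {G : Type*} [Group G] (N : Subgroup G) [N.Normal]
    [Finite N] (h : AcylindricallyArboreal G) : AcylindricallyArboreal (G ⧸ N) := by
  obtain ⟨A, ⟨k, C, hC, hA⟩, hunb, hnvc⟩ := h
  have : Finite (QuotientGroup.mk' N).ker := by rwa [QuotientGroup.ker_mk']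
  exact ⟨A.quotient N, ⟨k, _, Nat.mul_pos (Nat.mul_pos Nat.card_pos Nat.card_pos) hC, hA.quotient⟩,
    fun hb => hunb hb.of_quotient,
    fun hvc => hnvc (hvc.of_finite_ker (QuotientGroup.mk'_surjective N))⟩

namespace TreeAction

variable {G Q : Type*} [Group G] [Group Q] (A : TreeAction Q) (π : G →* Q)

def comap : TreeAction G := ⟨A.V, A.T, A.isTree, A.act.comp π⟩

variable {A π}

theorem KCAcylindrical.comap [Finite π.ker] {k C : ℕ} (h : A.KCAcylindrical k C) :
    (A.comap π).KCAcylindrical k (C * Nat.card π.ker) := by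
  intro x y hxy
  obtain ⟨hfin, hcard⟩ := h x y hxy
  obtain ⟨hs, hscard⟩ := Set.finite_and_ncard_le_of_inv_mul_mem (K := π.ker) hfin (Set.toFinite _)
    (Set.mapsTo_preimage π _) fun a _ b _ hab => π.eq_iff.mp hab.symm
  exact ⟨hs, hscard.trans (Nat.mul_le_mul hcard (Nat.card_coe_set_eq _).ge)⟩

theorem BoundedOrbits.of_comap (hπ : Surjective π) (h : (A.comap π).BoundedOrbits) :
    A.BoundedOrbits := by
  obtain ⟨x, B, hB⟩ := h
  exact ⟨x, B, hπ.forall.mpr hB⟩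

end TreeAction

theorem AcylindricallyArboreal.of_finite_ker {G Q : Type*} [Group G] [Group Q] {π : G →* Q}
    (hπ : Surjective π) [Finite π.ker] (h : AcylindricallyArboreal Q) :
    AcylindricallyArboreal G := by
  obtain ⟨A, ⟨k, C, hC, hA⟩, hunb, hnvc⟩ := h
  exact ⟨A.comap π, ⟨k, _, Nat.mul_pos hC Nat.card_pos, hA.comap⟩,
    fun hb => hunb (hb.of_comap hπ), fun hvc => hnvc (hvc.of_surjective hπ)⟩

/-- Acylindrical arboreality passes to quotients by finite normal subgroups, and is
inherited from the quotient along any extension with finite kernel. -/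
theorem acylindricallyArboreal_finite_kernel :
    (∀ (G : Type) [Group G] (N : Subgroup G) [N.Normal], Finite N →
      AcylindricallyArboreal G → AcylindricallyArboreal (G ⧸ N)) ∧
    (∀ (G Q : Type) [Group G] [Group Q] (π : G →* Q), Function.Surjective π →
      Finite π.ker → AcylindricallyArboreal Q → AcylindricallyArboreal G) :=
  ⟨fun _ _ N _ _ h => h.quotient N, fun _ _ _ _ _ hπ _ h => h.of_finite_ker hπ⟩
end
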